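/- Jacobi determinant theorem: let F be a field, A an invertible n×n matrix over F, 1 ≤ k ≤ n, and I, J : Fin k → Fin n strictly monotone. Then det ((Matrix.adjugate A).submatrix I J) = C_{J,I} · (det A)^(k-1), i.e., det ((Matrix.adjugate A).submatrix I J) = (-1)^{∑ t ((I t : ℕ)+1) + ∑ t ((J t : ℕ)+1)} · det (A.submatrix Jᶜ Iᶜ) · (det A)^(k-1). -/

import Mathlib

/-!
Write `B = adjugate A` and reorder rows and columns so that the indices of `I` and `J` come
first: `A' = A[J ⊔ Jᶜ, I ⊔ Iᶜ]` and `B' = B[I ⊔ Iᶜ, J ⊔ Jᶜ]` satisfy `A' * B' = det A • 1`.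
Replacing the second block column of `B'` by `(0, 1)` gives
`A' * [[B₁₁, 0], [B₂₁, 1]] = [[det A • 1, *], [0, A'₂₂]]`, so
`det A' * det B₁₁ = (det A)^k * det A[Jᶜ, Iᶜ]`. Finally `det A' = ± det A`, where the sign is
read off from the inversions of the riffle shuffles `I ⊔ Iᶜ` and `J ⊔ Jᶜ`: the entry `I t` is
preceded by exactly `I t - t` entries of `Iᶜ`.
-/

/-- The unique strictly monotone map `Fin (n-k) → Fin n` whose range is the complement of
the range of an injective map `J : Fin k → Fin n`. -/
noncomputable def monoCompl {n k : ℕ} (J : Fin k → Fin n) (hJ : Function.Injective J) :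
    Fin (n - k) → Fin n :=
  (Finset.univ.image J)ᶜ.orderEmbOfFin (by
    rw [Finset.card_compl, Finset.card_image_of_injective _ hJ, Finset.card_univ,
      Fintype.card_fin, Fintype.card_fin])

/-- The generalized cofactor `C_{I,J}`: the signed determinant of the complementary
submatrix obtained by deleting the rows in `I` and the columns in `J`. -/
noncomputable def cofactor {F : Type*} [CommRing F] {n k : ℕ} (A : Matrix (Fin n) (Fin n) F)
    (I J : Fin k → Fin n) (hI : StrictMono I) (hJ : StrictMono J) : F :=
  (-1 : F) ^ (∑ t, ((I t : ℕ) + 1) + ∑ t, ((J t : ℕ) + 1)) *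
    (A.submatrix (monoCompl I hI.injective) (monoCompl J hJ.injective)).det

open Equiv Finset

section MonoCompl

variable {n k : ℕ}

theorem range_monoCompl (J : Fin k → Fin n) (hJ : Function.Injective J) :
    Set.range (monoCompl J hJ) = (Set.range J)ᶜ := by
  simp [monoCompl, Finset.range_orderEmbOfFin]

theorem strictMono_monoCompl (J : Fin k → Fin n) (hJ : Function.Injective J) :
    StrictMono (monoCompl J hJ) :=
  OrderEmbedding.strictMono _

theorem monoCompl_ne (J : Fin k → Fin n) (hJ : Function.Injective J) (s : Fin (n - k))
    (t : Fin k) : monoCompl J hJ s ≠ J t := by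
  have : monoCompl J hJ s ∈ (Set.range J)ᶜ := range_monoCompl J hJ ▸ Set.mem_range_self s
  exact fun h => this ⟨t, h.symm⟩

theorem bijective_sumElim_monoCompl (J : Fin k → Fin n) (hJ : Function.Injective J) :
    Function.Bijective (Sum.elim J (monoCompl J hJ)) := by
  refine ⟨hJ.sumElim (strictMono_monoCompl J hJ).injective
    fun t s h => monoCompl_ne J hJ s t h.symm, ?_⟩
  intro x
  by_cases hx : x ∈ Set.range J
  · obtain ⟨t, rfl⟩ := hx
    exact ⟨.inl t, rfl⟩
  · obtain ⟨s, rfl⟩ : x ∈ Set.range (monoCompl J hJ) := range_monoCompl J hJ ▸ hx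
    exact ⟨.inr s, rfl⟩

theorem card_monoCompl_lt_add (J : Fin k → Fin n) (hJ : StrictMono J) (t : Fin k) :
    #{s | monoCompl J hJ.injective s < J t} + t = J t := by
  set J' := monoCompl J hJ.injective
  have hlow : (Iio t).image J = {x ∈ Iio (J t) | x ∈ Set.range J} := by
    ext x
    simp only [mem_image, mem_Iio, mem_filter]
    constructor
    · rintro ⟨t', ht', rfl⟩
      exact ⟨hJ ht', t', rfl⟩
    · rintro ⟨hx, t', rfl⟩
      exact ⟨t', hJ.lt_iff_lt.1 hx, rfl⟩
  have hhigh : ({s | J' s < J t} : Finset _).image J' = {x ∈ Iio (J t) | x ∉ Set.range J} := by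
    ext x
    simp only [mem_image, mem_filter, mem_univ, true_and, mem_Iio]
    rw [← Set.mem_compl_iff, ← range_monoCompl J hJ.injective]
    constructor
    · rintro ⟨s, hs, rfl⟩
      exact ⟨hs, s, rfl⟩
    · rintro ⟨hx, s, rfl⟩
      exact ⟨s, hx, rfl⟩
  calc #{s | J' s < J t} + t
      = #{x ∈ Iio (J t) | x ∉ Set.range J} + #{x ∈ Iio (J t) | x ∈ Set.range J} := by
        rw [← hlow, ← hhigh, card_image_of_injective _ (strictMono_monoCompl J _).injective,
          card_image_of_injective _ hJ.injective, Fin.card_Iio]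
    _ = J t := by rw [add_comm, card_filter_add_card_filter_not, Fin.card_Iio]

noncomputable def monoComplSumEquiv (J : Fin k → Fin n) (hJ : Function.Injective J) :
    Fin k ⊕ Fin (n - k) ≃ Fin n :=
  Equiv.ofBijective _ (bijective_sumElim_monoCompl J hJ)

theorem monoComplSumEquiv_comp_inl (J : Fin k → Fin n) (hJ : Function.Injective J) :
    monoComplSumEquiv J hJ ∘ Sum.inl = J := rfl

theorem monoComplSumEquiv_comp_inr (J : Fin k → Fin n) (hJ : Function.Injective J) :
    monoComplSumEquiv J hJ ∘ Sum.inr = monoCompl J hJ := rfl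

end MonoCompl

namespace Equiv.Perm

theorem sign_trans_symm {α β : Type*} [DecidableEq α] [Fintype α] [DecidableEq β] [Fintype β]
    (d e f : α ≃ β) : sign (e.trans f.symm) = sign (d.symm.trans e) * sign (d.symm.trans f) := by
  have : e.trans f.symm = (d.trans ((d.symm.trans f)⁻¹ * d.symm.trans e)).trans d.symm := by
    ext; simp
  rw [this, sign_trans_trans_symm, sign_mul, sign_inv, mul_comm]

theorem sign_finSumFinEquiv_symm_trans {k m n : ℕ} (h : k + m = n) (e : Fin k ⊕ Fin m ≃ Fin n)
    (hl : StrictMono (e ∘ Sum.inl)) (hr : StrictMono (e ∘ Sum.inr)) :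
    sign ((finSumFinEquiv.trans (finCongr h)).symm.trans e) =
      ∏ s, ∏ t, if e (Sum.inl t) < e (Sum.inr s) then 1 else -1 := by
  subst h
  have hl' (a b : Fin k) : e (.inl a) < e (.inl b) ↔ a < b := hl.lt_iff_lt
  have hr' (a b : Fin m) : e (.inr a) < e (.inr b) ↔ a < b := hr.lt_iff_lt
  have hcc (a b : Fin k) : Fin.castAdd m a < Fin.castAdd m b ↔ a < b := Iff.rfl
  have hnc (a : Fin k) (c : Fin m) : ¬ Fin.natAdd k c < Fin.castAdd m a := by
    simp only [Fin.lt_def, Fin.val_castAdd, Fin.val_natAdd]; omega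
  have hcn (a : Fin k) (c : Fin m) : Fin.castAdd m a < Fin.natAdd k c := by
    simp only [Fin.lt_def, Fin.val_castAdd, Fin.val_natAdd]; omega
  -- Each block keeps its order, so the only inversions are the pairs `(inl t, inr s)` with
  -- `e (inr s) < e (inl t)`.
  rw [finCongr_refl, trans_refl, sign_eq_prod_prod_Iio]
  simp_rw [← filter_gt_eq_Iio, prod_filter, Fin.prod_univ_add]
  simp +contextual [hl', hr', hcc, hnc, hcn, Fin.natAdd_lt_natAdd_iff]

end Equiv.Perm

section Sign

variable {n k : ℕ}

theorem sign_monoComplSumEquiv (J : Fin k → Fin n) (hJ : StrictMono J) (h : k + (n - k) = n) :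
    Perm.sign ((finSumFinEquiv.trans (finCongr h)).symm.trans
        (monoComplSumEquiv J hJ.injective)) =
      (-1) ^ ∑ t, #{s | monoCompl J hJ.injective s < J t} := by
  rw [Perm.sign_finSumFinEquiv_symm_trans h (monoComplSumEquiv J hJ.injective) hJ
      (strictMono_monoCompl J hJ.injective), prod_comm, ← prod_pow_eq_pow_sum]
  refine prod_congr rfl fun t _ => ?_
  rw [prod_ite, prod_const_one, one_mul, prod_const]
  congr 2
  refine filter_congr fun s _ => ?_
  exact not_lt.trans (monoCompl_ne J _ s t).le_iff_lt

theorem sign_monoComplSumEquiv_trans_symm (I J : Fin k → Fin n) (hI : StrictMono I)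
    (hJ : StrictMono J) :
    Perm.sign ((monoComplSumEquiv J hJ.injective).trans (monoComplSumEquiv I hI.injective).symm) =
      (-1) ^ (∑ t, ((J t : ℕ) + 1) + ∑ t, ((I t : ℕ) + 1)) := by
  have h : k + (n - k) = n := Nat.add_sub_cancel' (Fin.le_of_injective I hI.injective)
  have hsum (L : Fin k → Fin n) (hL : StrictMono L) : ∑ t, ((L t : ℕ) + 1) =
      ∑ t, #{s | monoCompl L hL.injective s < L t} + ∑ t : Fin k, ((t : ℕ) + 1) := by
    simp_rw [← card_monoCompl_lt_add L hL, add_assoc, sum_add_distrib]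
  rw [Perm.sign_trans_symm (finSumFinEquiv.trans (finCongr h)), sign_monoComplSumEquiv J hJ h,
    sign_monoComplSumEquiv I hI h, hsum J hJ, hsum I hI, add_add_add_comm, ← two_mul, pow_add,
    pow_add, pow_mul, Int.units_sq, one_pow, mul_one]

end Sign

namespace Matrix

variable {ι ι₁ ι₂ κ R : Type*} [CommRing R] [Fintype ι] [DecidableEq ι] [Fintype κ] [DecidableEq κ]
  [Fintype ι₁] [DecidableEq ι₁] [Fintype ι₂] [DecidableEq ι₂]

theorem det_submatrix_equiv (A : Matrix κ κ R) (e f : ι ≃ κ) :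
    (A.submatrix e f).det = Perm.sign (e.trans f.symm) * A.det := by
  have : A.submatrix e f = (A.submatrix f f).submatrix (e.trans f.symm) id := by
    ext; simp
  rw [this, det_permute, det_submatrix_equiv_self]

theorem det_mul_det_toBlocks₁₁_of_mul_eq_smul_one (M N : Matrix (ι₁ ⊕ ι₂) (ι₁ ⊕ ι₂) R) (c : R)
    (h : M * N = c • 1) :
    M.det * N.toBlocks₁₁.det = c ^ Fintype.card ι₁ * M.toBlocks₂₂.det := by
  have hblocks : M.toBlocks₁₁ * N.toBlocks₁₁ + M.toBlocks₁₂ * N.toBlocks₂₁ = c • 1 ∧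
      M.toBlocks₂₁ * N.toBlocks₁₁ + M.toBlocks₂₂ * N.toBlocks₂₁ = 0 := by
    rw [← fromBlocks_toBlocks M, ← fromBlocks_toBlocks N, fromBlocks_multiply, ← fromBlocks_one,
      fromBlocks_smul, fromBlocks_inj] at h
    simp only [smul_zero] at h
    exact ⟨h.1, h.2.2.1⟩
  have hmul : M * fromBlocks N.toBlocks₁₁ 0 N.toBlocks₂₁ 1 =
      fromBlocks (c • 1) M.toBlocks₁₂ 0 M.toBlocks₂₂ := by
    conv_lhs => rw [← fromBlocks_toBlocks M]
    rw [fromBlocks_multiply, hblocks.1, hblocks.2]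
    simp
  have := congrArg det hmul
  rwa [det_mul, det_fromBlocks_zero₁₂, det_fromBlocks_zero₂₁, det_one, mul_one, det_smul,
    det_one, mul_one] at this

theorem sign_mul_det_mul_det_submatrix_adjugate (A : Matrix κ κ R) (e f : ι₁ ⊕ ι₂ ≃ κ) :
    Perm.sign (f.trans e.symm) * A.det * ((adjugate A).submatrix (e ∘ Sum.inl) (f ∘ Sum.inl)).det =
      A.det ^ Fintype.card ι₁ * (A.submatrix (f ∘ Sum.inr) (e ∘ Sum.inr)).det := by
  have h : A.submatrix f e * (adjugate A).submatrix e f = A.det • 1 := by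
    rw [submatrix_mul_equiv, mul_adjugate]
    ext i j
    simp [one_apply]
  rw [← det_submatrix_equiv]
  exact det_mul_det_toBlocks₁₁_of_mul_eq_smul_one _ _ _ h

end Matrix

theorem jacobi_determinant_general {F : Type*} [Field F] {n k : ℕ} (hk1 : 1 ≤ k)
    (A : Matrix (Fin n) (Fin n) F) (hA : IsUnit A.det)
    (I J : Fin k → Fin n) (hI : StrictMono I) (hJ : StrictMono J) :
    ((Matrix.adjugate A).submatrix I J).det = cofactor A J I hJ hI * A.det ^ (k - 1) := by
  have key := Matrix.sign_mul_det_mul_det_submatrix_adjugate A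
    (monoComplSumEquiv I hI.injective) (monoComplSumEquiv J hJ.injective)
  rw [sign_monoComplSumEquiv_trans_symm I J hI hJ, monoComplSumEquiv_comp_inl,
    monoComplSumEquiv_comp_inl, monoComplSumEquiv_comp_inr, monoComplSumEquiv_comp_inr,
    Fintype.card_fin] at key
  push_cast at key
  set ε : F := (-1) ^ (∑ t, ((J t : ℕ) + 1) + ∑ t, ((I t : ℕ) + 1))
  set D := (A.submatrix (monoCompl J hJ.injective) (monoCompl I hI.injective)).det
  have hcof : cofactor A J I hJ hI = ε * D := rfl
  have hε : ε * ε = 1 := by rw [← pow_add, ← two_mul, pow_mul, neg_one_sq, one_pow]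
  have hpow : A.det ^ (k - 1) * A.det = A.det ^ k := pow_sub_one_mul (by omega) _
  refine hA.mul_left_cancel ?_
  rw [hcof]
  linear_combination ε * key - A.det * ((Matrix.adjugate A).submatrix I J).det * hε - ε * D * hpow

theorem jacobi_determinant {F : Type*} [Field F] {n k : ℕ} (hk1 : 1 ≤ k) (hk : k ≤ n)
    (A : Matrix (Fin n) (Fin n) F) (hA : IsUnit A.det)
    (I J : Fin k → Fin n) (hI : StrictMono I) (hJ : StrictMono J) :
    ((Matrix.adjugate A).submatrix I J).det = cofactor A J I hJ hI * A.det ^ (k - 1) :=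
  jacobi_determinant_general hk1 A hA I J hI hJ
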